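/- For every real number b, 1 + b·r(b) − r(b)² > 0; equivalently, r(b)·(r(b) − b) < 1. -/

import Mathlib

open MeasureTheory Filter

/-- Standard normal density. -/
noncomputable def phi (x : ℝ) : ℝ := Real.exp (-x ^ 2 / 2) / Real.sqrt (2 * Real.pi)

/-- Standard normal cumulative distribution function. -/
noncomputable def Phi (x : ℝ) : ℝ := ∫ t in Set.Iio x, phi t

/-- Mills-type ratio. -/
noncomputable def r (b : ℝ) : ℝ := phi b / Phi (-b)

/-- The deficit transformation `F`. -/
noncomputable def F (b : ℝ) : ℝ := phi b / Phi (-b) - b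

open Set Real Topology

/-! `1 + b r - r²` is the variance of a standard normal variable conditioned on `X > b`.
Writing `Q = Φ(-b)`, the truncated moments are `∫_b^∞ φ = Q`, `∫_b^∞ t φ = φ(b)` and, integrating
by parts with `(t φ)' = φ - t² φ`, `∫_b^∞ t² φ = b φ(b) + Q`. Hence, with `r = φ(b) / Q`,
`Q (1 + b r - r²) = ∫_b^∞ (t - r)² φ(t) dt`, which is positive because the integrand vanishes only
at `t = r`. -/

lemma phi_eq_mul_exp (x : ℝ) : phi x = (√(2 * π))⁻¹ * exp (-(1 / 2) * x ^ 2) := by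
  rw [phi, div_eq_inv_mul]
  ring_nf

lemma phi_pos (x : ℝ) : 0 < phi x := by
  rw [phi]; positivity

lemma phi_neg (x : ℝ) : phi (-x) = phi x := by
  simp [phi]

lemma hasDerivAt_phi (x : ℝ) : HasDerivAt phi (-x * phi x) x := by
  have hexponent : HasDerivAt (fun t : ℝ => -t ^ 2 / 2) (-x) x := by
    simpa using ((hasDerivAt_pow 2 x).neg.div_const 2).congr_deriv (by ring)
  exact (hexponent.exp.div_const (√(2 * π))).congr_deriv (by rw [phi]; ring)

lemma integrable_pow_mul_phi (n : ℕ) : Integrable fun x => x ^ n * phi x := by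
  have h := (integrable_rpow_mul_exp_neg_mul_sq (b := 1 / 2) (by norm_num)
    (s := n) (by linarith [n.cast_nonneg (α := ℝ)])).const_mul (√(2 * π))⁻¹
  refine h.congr (ae_of_all _ fun x => ?_)
  simp only [rpow_natCast, phi_eq_mul_exp]
  ring

lemma integrable_phi : Integrable phi := by
  simpa using integrable_pow_mul_phi 0

lemma tendsto_pow_mul_phi_atTop (n : ℕ) : Tendsto (fun x => x ^ n * phi x) atTop (𝓝 0) := by
  have h := ((tendsto_rpow_abs_mul_exp_neg_mul_sq_cocompact (a := 1 / 2) (by norm_num) n).mono_left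
    atTop_le_cocompact).const_mul (√(2 * π))⁻¹
  rw [mul_zero] at h
  refine h.congr' ?_
  filter_upwards [eventually_ge_atTop 0] with x hx
  rw [abs_of_nonneg hx, rpow_natCast, phi_eq_mul_exp]
  ring

lemma Phi_neg_eq_integral_Ioi (b : ℝ) : Phi (-b) = ∫ t in Ioi b, phi t := by
  rw [Phi, ← integral_Iic_eq_integral_Iio, ← integral_comp_neg_Ioi]
  simp only [phi_neg]

lemma Phi_pos (x : ℝ) : 0 < Phi x := by
  rw [Phi, setIntegral_pos_iff_support_of_nonneg_ae (ae_of_all _ fun t => (phi_pos t).le)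
    integrable_phi.integrableOn, Function.support_eq_univ fun t => (phi_pos t).ne']
  simp

lemma integral_Ioi_mul_phi (b : ℝ) : ∫ t in Ioi b, t * phi t = phi b := by
  have h := integral_Ioi_of_hasDerivAt_of_tendsto' (f := fun t => -phi t)
    (f' := fun t => t * phi t) (a := b) (m := 0)
    (fun x _ => (hasDerivAt_phi x).neg.congr_deriv (by ring))
    (by simpa using (integrable_pow_mul_phi 1).integrableOn)
    (by simpa using (tendsto_pow_mul_phi_atTop 0).neg)
  simpa using h

lemma integral_Ioi_pow_add_two_mul_phi (n : ℕ) (b : ℝ) :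
    ∫ t in Ioi b, t ^ (n + 2) * phi t =
      b ^ (n + 1) * phi b + (n + 1) * ∫ t in Ioi b, t ^ n * phi t := by
  have hderiv : ∀ x ∈ Ici b, HasDerivAt (fun t => -(t ^ (n + 1) * phi t))
      (x ^ (n + 2) * phi x - (n + 1) * (x ^ n * phi x)) x := fun x _ =>
    ((hasDerivAt_pow (n + 1) x).mul (hasDerivAt_phi x)).neg.congr_deriv (by push_cast; ring)
  have hint : IntegrableOn (fun t => (n + 1 : ℝ) * (t ^ n * phi t)) (Ioi b) :=
    (integrable_pow_mul_phi n).integrableOn.const_mul _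
  have h := integral_Ioi_of_hasDerivAt_of_tendsto' hderiv
    ((integrable_pow_mul_phi (n + 2)).integrableOn.sub hint)
    (by simpa using (tendsto_pow_mul_phi_atTop (n + 1)).neg)
  rw [integral_sub (integrable_pow_mul_phi _).integrableOn hint, integral_const_mul] at h
  linarith

lemma integral_Ioi_sq_sub_mul_phi (b c : ℝ) :
    ∫ t in Ioi b, (t - c) ^ 2 * phi t = (1 + c ^ 2) * Phi (-b) + (b - 2 * c) * phi b := by
  have hsecond := integral_Ioi_pow_add_two_mul_phi 0 b
  simp only [zero_add, pow_zero, one_mul, pow_one, Nat.cast_zero] at hsecond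
  have h0 : IntegrableOn phi (Ioi b) := integrable_phi.integrableOn
  have h1 : IntegrableOn (fun t => t * phi t) (Ioi b) := by
    simpa using (integrable_pow_mul_phi 1).integrableOn
  have h2 : IntegrableOn (fun t => t ^ 2 * phi t) (Ioi b) := (integrable_pow_mul_phi 2).integrableOn
  calc ∫ t in Ioi b, (t - c) ^ 2 * phi t
      = ∫ t in Ioi b, (t ^ 2 * phi t - 2 * c * (t * phi t)) + c ^ 2 * phi t := by
        congr 1; ext t; ring
    _ = (∫ t in Ioi b, t ^ 2 * phi t) - 2 * c * (∫ t in Ioi b, t * phi t)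
          + c ^ 2 * ∫ t in Ioi b, phi t := by
        rw [integral_add (by exact h2.sub (h1.const_mul _)) (h0.const_mul _),
          integral_sub h2 (h1.const_mul _), integral_const_mul, integral_const_mul]
    _ = (1 + c ^ 2) * Phi (-b) + (b - 2 * c) * phi b := by
        rw [hsecond, integral_Ioi_mul_phi, ← Phi_neg_eq_integral_Ioi]
        ring

lemma integral_Ioi_sq_sub_mul_phi_pos (b c : ℝ) : 0 < ∫ t in Ioi b, (t - c) ^ 2 * phi t := by
  have hint : Integrable fun t => (t - c) ^ 2 * phi t := by
    refine (((integrable_pow_mul_phi 2).sub ((integrable_pow_mul_phi 1).const_mul (2 * c))).add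
      (integrable_phi.const_mul (c ^ 2))).congr (ae_of_all _ fun t => ?_)
    simp only [Pi.add_apply, Pi.sub_apply]
    ring
  have hsupport : Function.support (fun t => (t - c) ^ 2 * phi t) = {c}ᶜ := by
    ext t
    simp [(phi_pos t).ne', sub_eq_zero]
  rw [setIntegral_pos_iff_support_of_nonneg_ae
    (ae_of_all _ fun t => mul_nonneg (sq_nonneg _) (phi_pos t).le) hint.integrableOn, hsupport]
  calc (0 : ENNReal) < volume (Ioi (max b c)) := by simp
    _ ≤ volume ({c}ᶜ ∩ Ioi b) := measure_mono fun t ht =>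
      ⟨(max_lt_iff.mp ht).2.ne', mem_Ioi.mpr (max_lt_iff.mp ht).1⟩

/-- For every real `b`, `1 + b·r(b) − r(b)² > 0`; equivalently `r(b)·(r(b) − b) < 1`. -/
theorem truncated_variance_pos (b : ℝ) :
    0 < 1 + b * r b - r b ^ 2 ∧ r b * (r b - b) < 1 := by
  have hPhi := Phi_pos (-b)
  have hphi : phi b = r b * Phi (-b) := (div_mul_cancel₀ _ hPhi.ne').symm
  have hvariance : 0 < (1 + b * r b - r b ^ 2) * Phi (-b) := by
    have h := integral_Ioi_sq_sub_mul_phi_pos b (r b)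
    rw [integral_Ioi_sq_sub_mul_phi, hphi] at h
    linarith
  have hpos := pos_of_mul_pos_left hvariance hPhi.le
  exact ⟨hpos, by linarith⟩
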